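/- Let n ∈ ℕ and let f, g be real-valued functions on ℝ, each n times differentiable. Then (1/n!) · Σ_{k=0}^{n} (-1)^k · C(n,k) · g^k · (f · g^{n-k})^{(n)} = f · (g')^n, i.e. Σ_{k=0}^{n} (-1)^k · C(n,k) · g^k · (f · g^{n-k})^{(n)} = n! · f · (g')^n, where C(n,k) is the binomial coefficient and h^{(n)} denotes the n-th derivative of h. -/

import Mathlib

/-!
Fix `x` and put `u = g - g x`, so that `u x = 0` and `u' = g'`. By the binomial theorem the
left-hand side is the `n`-th derivative of `f * u ^ n` at `x`. Since
`(f * u ^ (m + 1))' = f' * u ^ (m + 1) + (m + 1) * (f * u') * u ^ m`, induction on `n` shows that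
at a zero of `u` the `n`-th derivative of `f * u ^ m` vanishes for `m > n` and equals
`n! * f * u' ^ n` for `m = n`.
-/

open scoped Nat

section

variable {𝕜 : Type*} [NontriviallyNormedField 𝕜] {f u : 𝕜 → 𝕜}

lemma deriv_mul_pow_succ (hf : Differentiable 𝕜 f) (hu : Differentiable 𝕜 u) (m : ℕ) :
    deriv (fun t => f t * u t ^ (m + 1)) =
      fun t => deriv f t * u t ^ (m + 1) + (m + 1) * f t * deriv u t * u t ^ m := by
  funext t
  rw [deriv_fun_mul (hf t) ((hu t).fun_pow _), deriv_fun_pow (hu t)]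
  push_cast
  ring

lemma iteratedDeriv_mul_pow_eq_zero_of_lt {x : 𝕜} (hux : u x = 0) {n m : ℕ}
    (hf : ContDiff 𝕜 n f) (hu : ContDiff 𝕜 n u) (hnm : n < m) :
    iteratedDeriv n (fun t => f t * u t ^ m) x = 0 := by
  induction n generalizing m f u with
  | zero =>
    obtain ⟨m, rfl⟩ := Nat.exists_eq_add_one_of_ne_zero hnm.ne'
    simp [hux]
  | succ n ih =>
    obtain ⟨m, rfl⟩ := Nat.exists_eq_add_one_of_ne_zero (Nat.ne_zero_of_lt hnm)
    rw [Nat.cast_succ] at hf hu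
    have hf' := hf.deriv'
    have hu' := hu.deriv'
    have hfn := hf.of_le le_self_add
    have hun := hu.of_le le_self_add
    rw [iteratedDeriv_succ', deriv_mul_pow_succ (hf.differentiable (by simp))
      (hu.differentiable (by simp)), iteratedDeriv_fun_add (by fun_prop) (by fun_prop),
      ih hux hf' hun (by omega), ih hux (by fun_prop) hun (by omega), add_zero]

lemma iteratedDeriv_mul_pow_self {x : 𝕜} (hux : u x = 0) {n : ℕ}
    (hf : ContDiff 𝕜 n f) (hu : ContDiff 𝕜 n u) :
    iteratedDeriv n (fun t => f t * u t ^ n) x = n ! * f x * deriv u x ^ n := by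
  induction n generalizing f u with
  | zero => simp
  | succ n ih =>
    rw [Nat.cast_succ] at hf hu
    have hf' := hf.deriv'
    have hu' := hu.deriv'
    have hfn := hf.of_le le_self_add
    have hun := hu.of_le le_self_add
    rw [iteratedDeriv_succ', deriv_mul_pow_succ (hf.differentiable (by simp))
      (hu.differentiable (by simp)), iteratedDeriv_fun_add (by fun_prop) (by fun_prop),
      iteratedDeriv_mul_pow_eq_zero_of_lt hux hf' hun n.lt_succ_self, ih hux (by fun_prop) hun,
      Nat.factorial_succ]
    push_cast
    ring

end

theorem stmt_6 (n : ℕ) (f g : ℝ → ℝ)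
    (hf : ContDiff ℝ (n : ℕ∞) f) (hg : ContDiff ℝ (n : ℕ∞) g) (x : ℝ) :
    ∑ k ∈ Finset.range (n + 1),
      (-1 : ℝ) ^ k * (n.choose k : ℝ) * (g x) ^ k *
        iteratedDeriv n (fun t => f t * (g t) ^ (n - k)) x
      = (n.factorial : ℝ) * f x * (deriv g x) ^ n := by
  have hbinom : (fun t => f t * (g t - g x) ^ n) = fun t => ∑ k ∈ Finset.range (n + 1),
      (-1 : ℝ) ^ k * (n.choose k : ℝ) * g x ^ k * (f t * g t ^ (n - k)) := by
    funext t
    rw [sub_eq_neg_add, add_pow, Finset.mul_sum]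
    exact Finset.sum_congr rfl fun k _ => by ring
  have key := iteratedDeriv_mul_pow_self (u := fun t => g t - g x) (sub_self _) hf
    (hg.sub contDiff_const)
  rw [deriv_sub_const, hbinom, iteratedDeriv_fun_sum fun k _ => by fun_prop] at key
  simpa only [iteratedDeriv_const_mul_field] using key
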